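/- For all real numbers u, v > 0 and every p ∈ (0,2), the integral bound 4·∫₀^∞ min(1, u·(2π)^{−1/2}·t^{−1/p}) · min(1, v·(2π)^{−1/2}·t^{−1/p}) dt ≤ 8/((2−p)·(2π)^{p/2}) · (uv)^{p/2} holds. -/

import Mathlib

/-!
For `a, b ≥ 0` we have `min 1 a * min 1 b ≤ min 1 (a b)`, so the integrand is dominated by
`min 1 (c t^{-2/p})` with `c = uv/(2π)`. This function equals `1` up to `t = c^{p/2}` and the
integrable tail `c t^{-2/p}` beyond, so its integral is exactly `2 c^{p/2}/(2 - p)`.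
-/

open MeasureTheory Real Set

theorem min_one_mul_min_one_le {α : Type*} [Semiring α] [LinearOrder α] [IsOrderedRing α]
    {a b : α} (ha : 0 ≤ a) (hb : 0 ≤ b) : min 1 a * min 1 b ≤ min 1 (a * b) :=
  le_min (mul_le_one₀ (min_le_left _ _) (le_min zero_le_one hb) (min_le_left _ _))
    (mul_le_mul (min_le_right _ _) (min_le_right _ _) (le_min zero_le_one hb) ha)

section PowerTail

variable {c q t : ℝ}

theorem one_le_mul_rpow_neg_inv_iff (hc : 0 < c) (hq : 0 < q) (ht : 0 < t) :
    1 ≤ c * t ^ (-q⁻¹) ↔ t ≤ c ^ q := by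
  rw [← rpow_le_rpow_iff_of_neg (rpow_pos_of_pos hc q) ht (neg_lt_zero.2 (inv_pos.2 hq)),
    ← rpow_mul hc.le, mul_neg, mul_inv_cancel₀ hq.ne', rpow_neg_one, ← div_le_iff₀' hc, one_div]

theorem eqOn_min_one_mul_rpow_Ioc (hc : 0 < c) (hq : 0 < q) :
    EqOn (fun t ↦ min 1 (c * t ^ (-q⁻¹))) 1 (Ioc 0 (c ^ q)) := fun _ ⟨ht0, ht⟩ ↦
  min_eq_left ((one_le_mul_rpow_neg_inv_iff hc hq ht0).2 ht)

theorem eqOn_min_one_mul_rpow_Ioi (hc : 0 < c) (hq : 0 < q) :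
    EqOn (fun t ↦ min 1 (c * t ^ (-q⁻¹))) (fun t ↦ c * t ^ (-q⁻¹)) (Ioi (c ^ q)) := by
  intro t ht
  have ht0 : 0 < t := (rpow_pos_of_pos hc q).trans ht
  exact min_eq_right (not_le.1 <| (one_le_mul_rpow_neg_inv_iff hc hq ht0).not.2 (not_le.2 ht)).le

theorem neg_inv_lt_neg_one (hq0 : 0 < q) (hq1 : q < 1) : -q⁻¹ < -1 :=
  neg_lt_neg ((one_lt_inv₀ hq0).2 hq1)

theorem integrableOn_min_one_mul_rpow (hc : 0 < c) (hq0 : 0 < q) (hq1 : q < 1) :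
    IntegrableOn (fun t ↦ min 1 (c * t ^ (-q⁻¹))) (Ioi 0) := by
  rw [← Ioc_union_Ioi_eq_Ioi (rpow_pos_of_pos hc q).le]
  refine IntegrableOn.union ?_ ?_
  · exact (integrableOn_const measure_Ioc_lt_top.ne).congr_fun
      (eqOn_min_one_mul_rpow_Ioc hc hq0).symm measurableSet_Ioc
  · exact IntegrableOn.congr_fun ((integrableOn_Ioi_rpow_of_lt (neg_inv_lt_neg_one hq0 hq1)
      (rpow_pos_of_pos hc q)).const_mul c) (eqOn_min_one_mul_rpow_Ioi hc hq0).symm measurableSet_Ioi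

theorem integral_min_one_mul_rpow (hc : 0 < c) (hq0 : 0 < q) (hq1 : q < 1) :
    ∫ t in Ioi 0, min 1 (c * t ^ (-q⁻¹)) = c ^ q / (1 - q) := by
  set T := c ^ q
  have hT : 0 < T := rpow_pos_of_pos hc q
  have hcT : c * T ^ (-q⁻¹) = 1 := by
    rw [← rpow_mul hc.le, mul_neg, mul_inv_cancel₀ hq0.ne', rpow_neg_one, mul_inv_cancel₀ hc.ne']
  have hint := integrableOn_min_one_mul_rpow hc hq0 hq1
  rw [← Ioc_union_Ioi_eq_Ioi hT.le, setIntegral_union (Ioc_disjoint_Ioi le_rfl) measurableSet_Ioi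
      (hint.mono_set Ioc_subset_Ioi_self) (hint.mono_set (Ioi_subset_Ioi hT.le)),
    setIntegral_congr_fun measurableSet_Ioc (eqOn_min_one_mul_rpow_Ioc hc hq0),
    setIntegral_congr_fun measurableSet_Ioi (eqOn_min_one_mul_rpow_Ioi hc hq0),
    integral_const_mul, integral_Ioi_rpow_of_lt (neg_inv_lt_neg_one hq0 hq1) hT,
    rpow_add hT, rpow_one, Pi.one_def, setIntegral_const, Real.volume_real_Ioc_of_le hT.le,
    smul_eq_mul, mul_one, sub_zero, ← mul_div_assoc, mul_neg, ← mul_assoc, hcT, one_mul]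
  have hden : -q⁻¹ + 1 = -((1 - q) / q) := by field_simp; ring
  have h1q : 1 - q ≠ 0 := (sub_pos.2 hq1).ne'
  rw [hden]
  field_simp
  ring

theorem integral_min_one_mul_min_one_rpow_le {a b : ℝ} (ha : 0 < a) (hb : 0 < b) (hq0 : 0 < q)
    (hq1 : q < 1) :
    ∫ t in Ioi 0, min 1 (a * t ^ (-(2 * q)⁻¹)) * min 1 (b * t ^ (-(2 * q)⁻¹))
      ≤ (a * b) ^ q / (1 - q) := by
  rw [← integral_min_one_mul_rpow (mul_pos ha hb) hq0 hq1]
  refine integral_mono_of_nonneg ?_ (integrableOn_min_one_mul_rpow (mul_pos ha hb) hq0 hq1) ?_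
    <;> filter_upwards [ae_restrict_mem measurableSet_Ioi] with t (ht : 0 < t)
  · positivity
  · calc _ ≤ min 1 (a * t ^ (-(2 * q)⁻¹) * (b * t ^ (-(2 * q)⁻¹))) :=
        min_one_mul_min_one_le (by positivity) (by positivity)
      _ = min 1 (a * b * t ^ (-q⁻¹)) := by
        rw [mul_mul_mul_comm, ← rpow_add ht]
        ring_nf

end PowerTail

theorem exit_time_moment_calculus_bound (u v p : ℝ) (hu : 0 < u) (hv : 0 < v)
    (hp0 : 0 < p) (hp2 : p < 2) :
    4 * ∫ t in Ioi (0 : ℝ),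
          min 1 (u * (2 * π) ^ (-(1 : ℝ) / 2) * t ^ (-(1 : ℝ) / p))
            * min 1 (v * (2 * π) ^ (-(1 : ℝ) / 2) * t ^ (-(1 : ℝ) / p))
      ≤ 8 / ((2 - p) * (2 * π) ^ (p / 2)) * (u * v) ^ (p / 2) := by
  set A := u * (2 * π) ^ (-(1 : ℝ) / 2)
  set B := v * (2 * π) ^ (-(1 : ℝ) / 2)
  have hAB : A * B = u * v / (2 * π) := by
    rw [mul_mul_mul_comm, ← rpow_add (by positivity), show -(1 : ℝ) / 2 + -1 / 2 = -1 by norm_num,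
      rpow_neg_one, div_eq_mul_inv]
  rw [show -(1 : ℝ) / p = -(2 * (p / 2))⁻¹ by ring]
  calc _ ≤ 4 * ((A * B) ^ (p / 2) / (1 - p / 2)) := by
        gcongr
        exact integral_min_one_mul_min_one_rpow_le (by positivity) (by positivity) (by positivity)
          (by linarith)
    _ = 8 / ((2 - p) * (2 * π) ^ (p / 2)) * (u * v) ^ (p / 2) := by
      have h2p : 2 - p ≠ 0 := (sub_pos.2 hp2).ne'
      rw [hAB, div_rpow (by positivity) (by positivity)]
      field_simp
      ring
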